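/- arXiv:1506.09055 — 3 statements merged into one kernel-verified Lean document; each statement's English description precedes it below -/
import Mathlib

section
/- There exists a constant c₂ > 0 such that for all integers t ≥ 2, n with 1 ≤ n ≤ t−1, and integers k, j satisfying t/4 ≤ k ≤ 3t/4, n/4 ≤ j ≤ 3n/4, and (t−n)/4 ≤ k−j ≤ 3(t−n)/4, one has C(n,j)·C(t−n, k−j)/C(t,k) ≤ c₂/√(min(n, t−n)), where C(a,b) denotes the binomial coefficient. -/
/-!
For `n ≥ 1` the effective Stirling bounds
`√(2πn) (n/e)^n ≤ n! ≤ (e/√(2π)) · √(2πn) (n/e)^n` show that `C(a+b, a)` agrees up to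
bounded factors with `√((a+b)/(2πab)) · exp H(a, b)`, where
`H(a, b) = (a+b) log (a+b) - a log a - b log b`. Since `H` is superadditive (Gibbs' inequality),
the exponential factors of `C(n, j) C(t-n, k-j) / C(t, k)` contribute at most `1`. What remains
is a product of square roots, which is `O(1 / √(min n (t-n)))` as soon as each of `j`, `n - j`,
`k - j`, `t - n - (k - j)` is at least a quarter of `n` resp. `t - n`.
-/

open Real Nat Stirling

noncomputable def stirlingApprox (n : ℕ) : ℝ := √(2 * π * n) * (n / exp 1) ^ n

theorem stirlingApprox_pos {n : ℕ} (hn : n ≠ 0) : 0 < stirlingApprox n := by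
  unfold stirlingApprox; positivity

theorem factorial_le_stirlingApprox {n : ℕ} (hn : n ≠ 0) :
    (n ! : ℝ) ≤ exp 1 / √(2 * π) * stirlingApprox n := by
  obtain ⟨m, rfl⟩ := Nat.exists_eq_add_of_le' (Nat.one_le_iff_ne_zero.mpr hn)
  have hseq : stirlingSeq (m + 1) ≤ exp 1 / √2 := by
    simpa [stirlingSeq_one] using stirlingSeq'_antitone (Nat.zero_le m)
  have hpos : 0 < √(2 * (m + 1 : ℕ)) * ((m + 1 : ℕ) / exp 1) ^ (m + 1) := by positivity
  rw [stirlingSeq, div_le_iff₀ hpos] at hseq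
  refine hseq.trans_eq ?_
  rw [stirlingApprox, sqrt_mul' (2 * π) (Nat.cast_nonneg _), sqrt_mul' 2 (Nat.cast_nonneg _),
    sqrt_mul' 2 pi_pos.le]
  field_simp

/-- `(a + b) * binEntropy (a / (a + b))`, i.e. the binary entropy without normalisation. -/
noncomputable def splitEntropy (a b : ℝ) : ℝ := (a + b) * log (a + b) - a * log a - b * log b

theorem sub_le_mul_log_div {x y : ℝ} (hx : 0 < x) (hy : 0 < y) : x - y ≤ x * log (x / y) := by
  have h := one_sub_inv_le_log_of_pos (div_pos hx hy)
  rw [inv_div] at h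
  calc x - y = x * (1 - y / x) := by field_simp
    _ ≤ x * log (x / y) := mul_le_mul_of_nonneg_left h hx.le

theorem splitEntropy_add_le {a b c d : ℝ} (ha : 0 < a) (hb : 0 < b) (hc : 0 < c) (hd : 0 < d) :
    splitEntropy a b + splitEntropy c d ≤ splitEntropy (a + c) (b + d) := by
  -- Gibbs' inequality for each of `a, c, b, d` against its share `p * q / T` of the total
  -- mass `T = a + b + c + d`; the four shares add up to `T`, so the linear terms cancel.
  have gibbs {x p q : ℝ} (hx : 0 < x) (hp : 0 < p) (hq : 0 < q) :
      x - p * q / (a + c + (b + d)) ≤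
        x * (log x - log p - log q + log (a + c + (b + d))) := by
    have := sub_le_mul_log_div hx (y := p * q / (a + c + (b + d))) (by positivity)
    rw [log_div hx.ne' (by positivity), log_div (by positivity) (by positivity),
      log_mul hp.ne' hq.ne'] at this
    exact this.trans_eq (by ring)
  have h1 := gibbs ha (p := a + c) (q := a + b) (by positivity) (by positivity)
  have h2 := gibbs hc (p := a + c) (q := c + d) (by positivity) (by positivity)
  have h3 := gibbs hb (p := b + d) (q := a + b) (by positivity) (by positivity)
  have h4 := gibbs hd (p := b + d) (q := c + d) (by positivity) (by positivity)
  have hmass : (a + c) * (a + b) / (a + c + (b + d)) + (a + c) * (c + d) / (a + c + (b + d))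
      + (b + d) * (a + b) / (a + c + (b + d)) + (b + d) * (c + d) / (a + c + (b + d))
      = a + c + (b + d) := by
    field_simp; ring
  unfold splitEntropy
  linarith

theorem stirlingApprox_add_div_mul {a b : ℕ} (ha : a ≠ 0) (hb : b ≠ 0) :
    stirlingApprox (a + b) / (stirlingApprox a * stirlingApprox b)
      = √((a + b) / (2 * π * (a * b))) * exp (splitEntropy a b) := by
  have ha' : (0 : ℝ) < a := by positivity
  have hb' : (0 : ℝ) < b := by positivity
  have exp_mul_log {x : ℝ} (hx : 0 < x) (n : ℕ) : exp (n * log x) = x ^ n := by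
    rw [exp_nat_mul, exp_log hx]
  have hexp : exp (splitEntropy a b)
      = ((a + b : ℕ) : ℝ) ^ (a + b) / ((a : ℝ) ^ a * (b : ℝ) ^ b) := by
    rw [splitEntropy, exp_sub, exp_sub, ← Nat.cast_add, exp_mul_log (by positivity),
      exp_mul_log ha', exp_mul_log hb', div_div]
  have hsqrt : √(2 * π * (a + b : ℕ))
      = √((a + b) / (2 * π * (a * b))) * (√(2 * π * a) * √(2 * π * b)) := by
    rw [← sqrt_mul (by positivity), ← sqrt_mul (by positivity)]
    congr 1
    push_cast
    field_simp
  rw [hexp, stirlingApprox, stirlingApprox, stirlingApprox, hsqrt, div_pow, div_pow, div_pow,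
    pow_add, pow_add]
  field_simp

theorem choose_le_stirlingApprox {a b : ℕ} (ha : a ≠ 0) (hb : b ≠ 0) :
    ((a + b).choose a : ℝ)
      ≤ exp 1 / √(2 * π)
        * (stirlingApprox (a + b) / (stirlingApprox a * stirlingApprox b)) := by
  rw [Nat.cast_add_choose, ← mul_div_assoc]
  exact div_le_div₀ (mul_pos (by positivity) (stirlingApprox_pos (by omega))).le
    (factorial_le_stirlingApprox (by omega))
    (mul_pos (stirlingApprox_pos ha) (stirlingApprox_pos hb))
    (mul_le_mul (le_factorial_stirling a) (le_factorial_stirling b)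
      (stirlingApprox_pos hb).le (by positivity))

theorem stirlingApprox_le_choose {a b : ℕ} (ha : a ≠ 0) (hb : b ≠ 0) :
    stirlingApprox (a + b) / (stirlingApprox a * stirlingApprox b)
      ≤ (exp 1 / √(2 * π)) ^ 2 * ((a + b).choose a : ℝ) := by
  have hab : (0 : ℝ) < a ! * b ! := by positivity
  rw [div_le_iff₀ (mul_pos (stirlingApprox_pos ha) (stirlingApprox_pos hb)),
    Nat.cast_add_choose]
  calc stirlingApprox (a + b) ≤ (a + b)! := le_factorial_stirling _
    _ = (a + b)! / (a ! * b !) * (a ! * b !) := (div_mul_cancel₀ _ hab.ne').symm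
    _ ≤ (a + b)! / (a ! * b !) * (exp 1 / √(2 * π) * stirlingApprox a
          * (exp 1 / √(2 * π) * stirlingApprox b)) :=
      have hfa := factorial_le_stirlingApprox ha
      have hfb := factorial_le_stirlingApprox hb
      mul_le_mul_of_nonneg_left
        (mul_le_mul hfa hfb (by positivity) ((by positivity : (0 : ℝ) ≤ a !).trans hfa))
        (by positivity)
    _ = _ := by ring

theorem choose_mul_choose_div_choose_le {a b c d : ℕ} (ha : a ≠ 0) (hb : b ≠ 0) (hc : c ≠ 0)
    (hd : d ≠ 0) :
    ((a + b).choose a : ℝ) * (c + d).choose c / (a + c + (b + d)).choose (a + c)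
      ≤ (exp 1 / √(2 * π)) ^ 4
        * √((a + b) * (c + d) * ((a + c) * (b + d)) / (a * b * (c * d) * (a + c + (b + d)))
            / (2 * π)) := by
  have hac : a + c ≠ 0 := by omega
  have hbd : b + d ≠ 0 := by omega
  have h1 := choose_le_stirlingApprox ha hb
  have h2 := choose_le_stirlingApprox hc hd
  have h3 := stirlingApprox_le_choose hac hbd
  rw [stirlingApprox_add_div_mul ha hb] at h1
  rw [stirlingApprox_add_div_mul hc hd] at h2
  rw [stirlingApprox_add_div_mul hac hbd] at h3
  push_cast at h3
  have hE := splitEntropy_add_le (a := a) (b := b) (c := c) (d := d)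
    (by positivity) (by positivity) (by positivity) (by positivity)
  set κ := exp 1 / √(2 * π)
  set Q₁ := ((a : ℝ) + b) / (2 * π * (a * b))
  set Q₂ := ((c : ℝ) + d) / (2 * π * (c * d))
  set Q₃ := ((a : ℝ) + c + (b + d)) / (2 * π * ((a + c) * (b + d)))
  have hQ₁ : 0 < Q₁ := by positivity
  have hQ₂ : 0 < Q₂ := by positivity
  have hQ₃ : 0 < Q₃ := by positivity
  calc ((a + b).choose a : ℝ) * (c + d).choose c / (a + c + (b + d)).choose (a + c)
      ≤ κ * (√Q₁ * exp (splitEntropy a b)) * (κ * (√Q₂ * exp (splitEntropy c d)))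
          / (√Q₃ * exp (splitEntropy (a + c) (b + d)) / κ ^ 2) := by
        refine div_le_div₀ (by positivity) (mul_le_mul h1 h2 (by positivity) (by positivity))
          (by positivity) ?_
        rw [div_le_iff₀ (by positivity)]
        linarith
    _ = κ ^ 4 * (√Q₁ * √Q₂ / √Q₃)
          * exp (splitEntropy a b + splitEntropy c d - splitEntropy (a + c) (b + d)) := by
        rw [exp_sub, exp_add]
        field_simp
    _ ≤ κ ^ 4 * (√Q₁ * √Q₂ / √Q₃) :=
        mul_le_of_le_one_right (by positivity) (exp_le_one_iff.mpr (by linarith))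
    _ = _ := by
        rw [← sqrt_mul hQ₁.le, ← sqrt_div (by positivity)]
        congr 2
        simp only [Q₁, Q₂, Q₃]
        field_simp

theorem split_ratio_le_div_min {a b c d : ℝ} (ha : 0 < a) (hb : 0 < b) (hc : 0 < c)
    (hd : 0 < d) (ha₄ : a + b ≤ 4 * a) (hb₄ : a + b ≤ 4 * b) (hc₄ : c + d ≤ 4 * c)
    (hd₄ : c + d ≤ 4 * d) :
    (a + b) * (c + d) * ((a + c) * (b + d)) / (a * b * (c * d) * (a + c + (b + d)))
      ≤ 128 / min (a + b) (c + d) := by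
  set μ := min (a + b) (c + d)
  have hμ : 0 < μ := lt_min (by positivity) (by positivity)
  have hab : (a + b) ^ 2 ≤ 16 * (a * b) := by nlinarith
  have hcd : (c + d) ^ 2 ≤ 16 * (c * d) := by nlinarith
  have hac_bd : (a + c) * (b + d) ≤ (a + c + (b + d)) ^ 2 / 4 := by
    nlinarith [sq_nonneg (a + c - (b + d))]
  have hμ_sum : (a + c + (b + d)) * μ ≤ 2 * ((a + b) * (c + d)) := by
    nlinarith [min_le_left (a + b) (c + d), min_le_right (a + b) (c + d)]
  rw [div_le_div_iff₀ (by positivity) hμ]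
  calc (a + b) * (c + d) * ((a + c) * (b + d)) * μ
      ≤ (a + b) * (c + d) * ((a + c + (b + d)) ^ 2 / 4) * μ := by gcongr
    _ = (a + b) * (c + d) * (a + c + (b + d)) / 4 * ((a + c + (b + d)) * μ) := by ring
    _ ≤ (a + b) * (c + d) * (a + c + (b + d)) / 4 * (2 * ((a + b) * (c + d))) := by gcongr
    _ = (a + b) ^ 2 * (c + d) ^ 2 * (a + c + (b + d)) / 2 := by ring
    _ ≤ 16 * (a * b) * (16 * (c * d)) * (a + c + (b + d)) / 2 := by gcongr
    _ = 128 * (a * b * (c * d) * (a + c + (b + d))) := by ring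

theorem choose_mul_choose_div_choose_le_of_balanced {a b c d : ℕ} (ha : 0 < a) (hb : 0 < b)
    (hc : 0 < c) (hd : 0 < d) (ha₄ : (a + b : ℝ) ≤ 4 * a) (hb₄ : (a + b : ℝ) ≤ 4 * b)
    (hc₄ : (c + d : ℝ) ≤ 4 * c) (hd₄ : (c + d : ℝ) ≤ 4 * d) :
    ((a + b).choose a : ℝ) * (c + d).choose c / (a + c + (b + d)).choose (a + c)
      ≤ (exp 1 / √(2 * π)) ^ 4 * √(128 / (2 * π)) / √(min (a + b) (c + d) : ℕ) := by
  refine (choose_mul_choose_div_choose_le ha.ne' hb.ne' hc.ne' hd.ne').trans ?_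
  rw [mul_div_assoc ((exp 1 / √(2 * π)) ^ 4), ← sqrt_div' _ (Nat.cast_nonneg _),
    div_right_comm (128 : ℝ), Nat.cast_min]
  push_cast
  gcongr _ * √(?_ / _)
  exact split_ratio_le_div_min (by positivity) (by positivity) (by positivity) (by positivity)
    ha₄ hb₄ hc₄ hd₄

/-- Binomial ratio bound: there is `c₂ > 0` such that for all `t ≥ 2`, `1 ≤ n ≤ t-1`,
and `k, j` with `t/4 ≤ k ≤ 3t/4`, `n/4 ≤ j ≤ 3n/4`, `(t-n)/4 ≤ k-j ≤ 3(t-n)/4`,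
one has `C(n,j)·C(t-n,k-j)/C(t,k) ≤ c₂/√(min(n,t-n))`. -/
theorem binomial_ratio_bound :
    ∃ c₂ : ℝ, 0 < c₂ ∧ ∀ t n k j : ℕ, 2 ≤ t → 1 ≤ n → n ≤ t - 1 → j ≤ k →
      (t : ℝ) / 4 ≤ (k : ℝ) → (k : ℝ) ≤ 3 * t / 4 →
      (n : ℝ) / 4 ≤ (j : ℝ) → (j : ℝ) ≤ 3 * n / 4 →
      ((t : ℝ) - n) / 4 ≤ (k : ℝ) - j → (k : ℝ) - j ≤ 3 * ((t : ℝ) - n) / 4 →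
      ((n.choose j : ℝ) * ((t - n).choose (k - j) : ℝ)) / (t.choose k : ℝ)
        ≤ c₂ / Real.sqrt (min n (t - n) : ℕ) := by
  refine ⟨(exp 1 / √(2 * π)) ^ 4 * √(128 / (2 * π)), by positivity, ?_⟩
  intro t n k j _ hn hnt hjk _ _ hj₁ hj₂ hi₁ hi₂
  obtain ⟨b, rfl⟩ := Nat.exists_eq_add_of_le
    (show j ≤ n by exact_mod_cast (by linarith : (j : ℝ) ≤ n))
  obtain ⟨i, rfl⟩ := Nat.exists_eq_add_of_le hjk
  obtain ⟨m, rfl⟩ := Nat.exists_eq_add_of_le (show j + b ≤ t by omega)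
  simp only [Nat.add_sub_cancel_left]
  push_cast at hj₁ hj₂ hi₁ hi₂
  obtain ⟨d, rfl⟩ := Nat.exists_eq_add_of_le
    (show i ≤ m by exact_mod_cast (by linarith : (i : ℝ) ≤ m))
  push_cast at hi₁ hi₂
  have hjb : (1 : ℝ) ≤ j + b := by exact_mod_cast hn
  have hid : (1 : ℝ) ≤ i + d := by exact_mod_cast (show 1 ≤ i + d by omega)
  have hj : 0 < j := by exact_mod_cast (by linarith : (0 : ℝ) < j)
  have hb : 0 < b := by exact_mod_cast (by linarith : (0 : ℝ) < b)
  have hi : 0 < i := by exact_mod_cast (by linarith : (0 : ℝ) < i)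
  have hd : 0 < d := by exact_mod_cast (by linarith : (0 : ℝ) < d)
  rw [show j + b + (i + d) = j + i + (b + d) by ring]
  exact choose_mul_choose_div_choose_le_of_balanced hj hb hi hd
    (by linarith) (by linarith) (by linarith) (by linarith)
end

section
/- For real numbers with 0 < j < n < t and 0 < k − j < t − n < t, the function (n/j)^j (n/(n−j))^{n−j} ((t−n)/(k−j))^{k−j} ((t−n)/(t−n−(k−j)))^{t−n−k+j} (k/t)^k ((t−k)/t)^{t−k}, viewed as a function of the continuous variable j, is maximized at j = kn/t, where its value equals 1. In particular it is at most 1 for all admissible j. -/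
/-- The entropy factor `(n/j)^j (n/(n-j))^{n-j} ((t-n)/(k-j))^{k-j}
((t-n)/(t-n-(k-j)))^{t-n-k+j} (k/t)^k ((t-k)/t)^{t-k}`, as a function of the
continuous variable `j`, attains the value `1` at `j = kn/t` and is at most `1` on the
whole admissible range. -/
theorem entropy_factor_le_one (t n k : ℝ) (hn : 0 < n) (hnt : n < t)
    (hk : 0 < k) (hkt : k < t)
    (f : ℝ → ℝ)
    (hf : ∀ j : ℝ, f j = (n / j) ^ j * (n / (n - j)) ^ (n - j)
        * ((t - n) / (k - j)) ^ (k - j)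
        * ((t - n) / (t - n - (k - j))) ^ (t - n - k + j)
        * (k / t) ^ k * ((t - k) / t) ^ (t - k)) :
    (∀ j : ℝ, max 0 (k - (t - n)) < j → j < min n k → f j ≤ 1) ∧
    f (k * n / t) = 1 := by
  have ht : 0 < t := hn.trans hnt
  have htn : 0 < t - n := sub_pos.2 hnt
  have htk : 0 < t - k := sub_pos.2 hkt
  -- the key factorization
  have key : ∀ j : ℝ, 0 < j → j < n → j < k → k - (t - n) < j →
      f j = (n * k / t / j) ^ j * (n * (t - k) / t / (n - j)) ^ (n - j)
        * ((t - n) * k / t / (k - j)) ^ (k - j)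
        * ((t - n) * (t - k) / t / (t - n - k + j)) ^ (t - n - k + j) := by
    intro j hj0 hjn hjk hjt
    have hnj : 0 < n - j := sub_pos.2 hjn
    have hkj : 0 < k - j := sub_pos.2 hjk
    have hp4 : 0 < t - n - k + j := by linarith
    have e1 : n / j = n * k / t / j * (t / k) := by
      field_simp
    have e2 : n / (n - j) = n * (t - k) / t / (n - j) * (t / (t - k)) := by
      field_simp [hnj.ne', ht.ne', htk.ne']
    have e3 : (t - n) / (k - j) = (t - n) * k / t / (k - j) * (t / k) := by
      field_simp [hkj.ne', ht.ne', hk.ne']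
    have e4 : (t - n) / (t - n - (k - j))
        = (t - n) * (t - k) / t / (t - n - k + j) * (t / (t - k)) := by
      rw [show t - n - (k - j) = t - n - k + j from by ring]
      field_simp [hp4.ne', ht.ne', htk.ne']
    rw [hf, e1, e2, e3, e4,
      Real.mul_rpow (by positivity) (by positivity),
      Real.mul_rpow (by positivity) (by positivity),
      Real.mul_rpow (by positivity) (by positivity),
      Real.mul_rpow (by positivity) (by positivity)]
    have h1 : (t / k) ^ j * (t / k) ^ (k - j) = (t / k) ^ k := by
      rw [← Real.rpow_add (by positivity), show j + (k - j) = k from by ring]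
    have h2 : (t / (t - k)) ^ (n - j) * (t / (t - k)) ^ (t - n - k + j)
        = (t / (t - k)) ^ (t - k) := by
      rw [← Real.rpow_add (by positivity),
        show (n - j) + (t - n - k + j) = t - k from by ring]
    have h3 : (t / k) ^ k * (k / t) ^ k = 1 := by
      rw [← Real.mul_rpow (by positivity) (by positivity),
        show t / k * (k / t) = 1 from by field_simp, Real.one_rpow]
    have h4 : (t / (t - k)) ^ (t - k) * ((t - k) / t) ^ (t - k) = 1 := by
      rw [← Real.mul_rpow (by positivity) (by positivity),
        show t / (t - k) * ((t - k) / t) = 1 from by field_simp, Real.one_rpow]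
    have hres : (t / k) ^ j * (t / (t - k)) ^ (n - j) * (t / k) ^ (k - j)
        * (t / (t - k)) ^ (t - n - k + j) * (k / t) ^ k * ((t - k) / t) ^ (t - k)
        = 1 := by
      calc (t / k) ^ j * (t / (t - k)) ^ (n - j) * (t / k) ^ (k - j)
            * (t / (t - k)) ^ (t - n - k + j) * (k / t) ^ k * ((t - k) / t) ^ (t - k)
          = ((t / k) ^ j * (t / k) ^ (k - j))
            * ((t / (t - k)) ^ (n - j) * (t / (t - k)) ^ (t - n - k + j))
            * (k / t) ^ k * ((t - k) / t) ^ (t - k) := by ring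
        _ = ((t / k) ^ k * (k / t) ^ k)
            * ((t / (t - k)) ^ (t - k) * ((t - k) / t) ^ (t - k)) := by
            rw [h1, h2]; ring
        _ = 1 := by rw [h3, h4, one_mul]
    calc (n * k / t / j) ^ j * (t / k) ^ j
          * ((n * (t - k) / t / (n - j)) ^ (n - j) * (t / (t - k)) ^ (n - j))
          * (((t - n) * k / t / (k - j)) ^ (k - j) * (t / k) ^ (k - j))
          * (((t - n) * (t - k) / t / (t - n - k + j)) ^ (t - n - k + j)
            * (t / (t - k)) ^ (t - n - k + j))
          * (k / t) ^ k * ((t - k) / t) ^ (t - k)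
        = ((n * k / t / j) ^ j * (n * (t - k) / t / (n - j)) ^ (n - j)
            * ((t - n) * k / t / (k - j)) ^ (k - j)
            * ((t - n) * (t - k) / t / (t - n - k + j)) ^ (t - n - k + j))
          * ((t / k) ^ j * (t / (t - k)) ^ (n - j) * (t / k) ^ (k - j)
            * (t / (t - k)) ^ (t - n - k + j) * (k / t) ^ k
            * ((t - k) / t) ^ (t - k)) := by ring
      _ = _ := by rw [hres, mul_one]
  have bound : ∀ x p : ℝ, 0 < x → 0 < p → (x / p) ^ p ≤ Real.exp (x - p) := by
    intro x p hx hp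
    rw [Real.rpow_def_of_pos (div_pos hx hp)]
    apply Real.exp_le_exp.2
    have hlog : Real.log (x / p) ≤ x / p - 1 := Real.log_le_sub_one_of_pos (div_pos hx hp)
    have : Real.log (x / p) * p ≤ (x / p - 1) * p := by
      exact mul_le_mul_of_nonneg_right hlog hp.le
    calc Real.log (x / p) * p ≤ (x / p - 1) * p := this
      _ = x - p := by field_simp
  constructor
  · intro j hj1 hj2
    have hj0 : 0 < j := lt_of_le_of_lt (le_max_left 0 _) hj1
    have hjn : j < n := lt_of_lt_of_le hj2 (min_le_left _ _)
    have hjk : j < k := lt_of_lt_of_le hj2 (min_le_right _ _)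
    have hjt : k - (t - n) < j := lt_of_le_of_lt (le_max_right 0 _) hj1
    have hnj : 0 < n - j := sub_pos.2 hjn
    have hkj : 0 < k - j := sub_pos.2 hjk
    have hp4 : 0 < t - n - k + j := by linarith
    rw [key j hj0 hjn hjk hjt]
    have b1 := bound (n * k / t) j (by positivity) hj0
    have b2 := bound (n * (t - k) / t) (n - j) (by positivity) hnj
    have b3 := bound ((t - n) * k / t) (k - j) (by positivity) hkj
    have b4 := bound ((t - n) * (t - k) / t) (t - n - k + j) (by positivity) hp4
    calc (n * k / t / j) ^ j * (n * (t - k) / t / (n - j)) ^ (n - j)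
          * ((t - n) * k / t / (k - j)) ^ (k - j)
          * ((t - n) * (t - k) / t / (t - n - k + j)) ^ (t - n - k + j)
        ≤ Real.exp (n * k / t - j) * Real.exp (n * (t - k) / t - (n - j))
          * Real.exp ((t - n) * k / t - (k - j))
          * Real.exp ((t - n) * (t - k) / t - (t - n - k + j)) := by
          gcongr <;> positivity
      _ = Real.exp (n * k / t - j + (n * (t - k) / t - (n - j))
            + ((t - n) * k / t - (k - j))
            + ((t - n) * (t - k) / t - (t - n - k + j))) := by
          rw [← Real.exp_add, ← Real.exp_add, ← Real.exp_add]
      _ = Real.exp 0 := by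
          congr 1
          field_simp
          ring
      _ = 1 := Real.exp_zero
  · have hj0 : 0 < k * n / t := by positivity
    have hjn : k * n / t < n := by
      rw [div_lt_iff₀ ht]
      nlinarith
    have hjk : k * n / t < k := by
      rw [div_lt_iff₀ ht]
      nlinarith
    have hjt : k - (t - n) < k * n / t := by
      rw [lt_div_iff₀ ht]
      nlinarith
    rw [key _ hj0 hjn hjk hjt]
    have b1 : n * k / t / (k * n / t) = 1 := by
      rw [div_eq_one_iff_eq (by positivity)]; ring
    have b2 : n * (t - k) / t / (n - k * n / t) = 1 := by
      rw [div_eq_one_iff_eq]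
      · field_simp
      · rw [sub_ne_zero]
        intro h
        nlinarith [hjn, h]
    have b3 : (t - n) * k / t / (k - k * n / t) = 1 := by
      rw [div_eq_one_iff_eq]
      · field_simp
      · rw [sub_ne_zero]
        intro h
        nlinarith [hjk, h]
    have b4 : (t - n) * (t - k) / t / (t - n - k + k * n / t) = 1 := by
      rw [div_eq_one_iff_eq]
      · field_simp; ring
      · intro h
        nlinarith [hjt, h]
    rw [b1, b2, b3, b4, Real.one_rpow, Real.one_rpow, Real.one_rpow, Real.one_rpow]
    norm_num
end

section
/- There exists a constant C₂ such that for the simple random walk on ℤ² the following holds: for all t ≥ 1, all x ∈ ℤ² with |x| ≤ t/2 (ℓ¹ norm), and all 0 ≤ n ≤ t, sup over z ∈ ℤ² with |z| ≤ n/2 and |x−z| ≤ (t−n)/2 of P(S_n = z, S_t = x)/P(S_t = x) is at most C₂/(1 + min(n, t−n)). -/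
/-!
In the coordinates `x₁ + x₂` and `x₁ - x₂` the walk on `ℤ²` is a pair of independent simple
walks on `ℤ`, so the ratio factors into two one-dimensional bridge probabilities, each of the
hypergeometric form `C(n, a) C(m, b) / C(n + m, a + b)`. The weights `C(n, i) C(m, j)` with
`i + j = s` sum to `C(n + m, s)`, and the ratio of neighbouring weights is `≤ 1` exactly when
`(n + 1)(j + 1) ≤ (m + 1)(i + 1)`, a linear condition. When `s` lies in the middle half of
`[0, n + m]`, the maximal weight sits in the bulk, and on the `L ≍ √(min n m)` weights next to it
the neighbouring ratios are at most `1 + 1/(2L)`; so `L + 1` weights are at least half the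
maximum, and the maximum is `O(C(n + m, s) / √(1 + min n m))`.
-/

open Finset Real

theorem succ_mul_le_two_mul_sum_range_of_le_mul {f : ℕ → ℝ} {ρ : ℝ} {L : ℕ} (hρ : 1 ≤ ρ)
    (hρL : ρ ^ L ≤ 2) (hf : ∀ l, 0 ≤ f l) (hstep : ∀ l < L, f l ≤ ρ * f (l + 1)) :
    (L + 1) * f 0 ≤ 2 * ∑ l ∈ range (L + 1), f l := by
  have hpow : ∀ l ≤ L, f 0 ≤ ρ ^ l * f l := by
    intro l hl
    induction l with
    | zero => simp
    | succ l ih =>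
      calc f 0 ≤ ρ ^ l * f l := ih (by omega)
        _ ≤ ρ ^ l * (ρ * f (l + 1)) := by gcongr; exact hstep l (by omega)
        _ = ρ ^ (l + 1) * f (l + 1) := by ring
  have hle : ∀ l ∈ range (L + 1), f 0 ≤ 2 * f l := by
    intro l hl
    have hl : l ≤ L := Nat.lt_succ_iff.mp (mem_range.mp hl)
    calc f 0 ≤ ρ ^ l * f l := hpow l hl
      _ ≤ 2 * f l := by gcongr; exacts [hf l, (pow_le_pow_right₀ hρ hl).trans hρL]
  calc ((L : ℝ) + 1) * f 0 = ∑ _l ∈ range (L + 1), f 0 := by simp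
    _ ≤ ∑ l ∈ range (L + 1), 2 * f l := sum_le_sum hle
    _ = 2 * ∑ l ∈ range (L + 1), f l := by rw [mul_sum]

theorem one_add_one_div_two_mul_pow_le_two (L : ℕ) : (1 + 1 / (2 * L : ℝ)) ^ L ≤ 2 := by
  rcases Nat.eq_zero_or_pos L with rfl | hL
  · norm_num
  calc (1 + 1 / (2 * L : ℝ)) ^ L ≤ exp (1 / (2 * L)) ^ L := by
        gcongr; linarith [add_one_le_exp (1 / (2 * L : ℝ))]
    _ = exp (1 / 2) := by rw [← exp_nat_mul]; field_simp
    _ ≤ 2 := by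
        rw [← le_log_iff_exp_le (by norm_num)]
        linarith [log_two_gt_d9]

namespace Nat

theorem choose_succ_mul_choose_mul (n m a b : ℕ) :
    n.choose (a + 1) * m.choose b * ((a + 1) * (m - b)) =
      n.choose a * m.choose (b + 1) * ((n - a) * (b + 1)) := by
  have hn := choose_succ_right_eq n a
  have hm := choose_succ_right_eq m b
  calc n.choose (a + 1) * m.choose b * ((a + 1) * (m - b))
      = (n.choose (a + 1) * (a + 1)) * (m.choose b * (m - b)) := by ring
    _ = (n.choose a * (n - a)) * (m.choose (b + 1) * (b + 1)) := by rw [hn, hm]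
    _ = _ := by ring

theorem succ_mul_succ_le_of_choose_mul_choose_le {n m a b : ℕ}
    (hpos : 0 < n.choose a * m.choose (b + 1))
    (hle : n.choose (a + 1) * m.choose b ≤ n.choose a * m.choose (b + 1)) :
    (n + 1) * (b + 1) ≤ (m + 1) * (a + 1) := by
  have ha : a ≤ n := choose_ne_zero_iff.mp (Nat.pos_of_mul_pos_right hpos).ne'
  have hb : b + 1 ≤ m := choose_ne_zero_iff.mp (Nat.pos_of_mul_pos_left hpos).ne'
  have hratio : (n - a) * (b + 1) ≤ (a + 1) * (m - b) := by
    refine le_of_mul_le_mul_left ?_ hpos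
    rw [← choose_succ_mul_choose_mul]
    exact mul_le_mul_right _ hle
  zify [ha, hb.trans' (le_succ b)] at hratio ⊢
  linarith

theorem choose_succ_mul_choose_le {n m a b L : ℕ} (hL : 0 < L)
    (hcross : (n + 1) * (b + 1) ≤ (m + 1) * (a + 1) + L * (n + m + 2))
    (hbulk : 2 * L * L * (n + m + 2) ≤ (a + 1) * (m - b)) :
    (n.choose (a + 1) * m.choose b : ℝ) ≤ (1 + 1 / (2 * L)) * (n.choose a * m.choose (b + 1)) := by
  have hdenom : 0 < (a + 1) * (m - b) := lt_of_lt_of_le (by positivity) hbulk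
  have hbm : b < m := Nat.lt_of_sub_pos (Nat.pos_of_mul_pos_left hdenom)
  have hratio : (n - a) * (b + 1) ≤ (a + 1) * (m - b) + L * (n + m + 2) := by
    rcases le_or_gt a n with han | han
    · zify [han, hbm.le] at hcross ⊢
      linarith
    · simp [Nat.sub_eq_zero_of_le han.le]
  have hc : (L * (n + m + 2) : ℝ) ≤ ((a + 1) * (m - b) : ℕ) / (2 * L) := by
    rw [le_div_iff₀ (by positivity)]
    exact_mod_cast (by nlinarith : L * (n + m + 2) * (2 * L) ≤ (a + 1) * (m - b))
  have hdenom_real : (0 : ℝ) < ((a + 1) * (m - b) : ℕ) := by exact_mod_cast hdenom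
  rw [← mul_le_mul_iff_of_pos_right hdenom_real]
  calc (n.choose (a + 1) * m.choose b : ℝ) * ((a + 1) * (m - b) : ℕ)
      = n.choose a * m.choose (b + 1) * ((n - a) * (b + 1) : ℕ) := by
        exact_mod_cast choose_succ_mul_choose_mul n m a b
    _ ≤ n.choose a * m.choose (b + 1) *
          (((a + 1) * (m - b) : ℕ) + ((a + 1) * (m - b) : ℕ) / (2 * L)) := by
        gcongr
        calc (((n - a) * (b + 1) : ℕ) : ℝ) ≤ ((a + 1) * (m - b) : ℕ) + L * (n + m + 2) := by
              exact_mod_cast hratio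
          _ ≤ _ := by gcongr
    _ = (1 + 1 / (2 * L)) * (n.choose a * m.choose (b + 1)) * ((a + 1) * (m - b) : ℕ) := by
        field_simp

theorem sum_range_choose_mul_choose_le (n m i j L : ℕ) (hL : L ≤ i) :
    ∑ l ∈ range (L + 1), n.choose (i - l) * m.choose (j + l) ≤ (n + m).choose (i + j) := by
  rw [add_choose_eq]
  have hinj : Set.InjOn (fun l => (i - l, j + l)) (range (L + 1) : Set ℕ) := by
    intro l _ l' _ h
    simp only [Prod.mk.injEq] at h
    omega
  rw [← sum_image (f := fun p : ℕ × ℕ => n.choose p.1 * m.choose p.2) hinj]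
  apply sum_le_sum_of_subset_of_nonneg
  · intro p hp
    simp only [mem_image, mem_range] at hp
    obtain ⟨l, hl, rfl⟩ := hp
    rw [HasAntidiagonal.mem_antidiagonal]
    omega
  · intros; positivity

theorem choose_mul_choose_le_of_near_mode {n m i j L l : ℕ}
    (hmode : (n + 1) * j ≤ (m + 1) * (i + 1)) (hi : n + 1 ≤ 4 * (i + 1)) (hj : 4 * j ≤ 3 * (m + 1))
    (hL : 256 * L ^ 2 ≤ min n m + 1) (hl : l < L) :
    (n.choose (i - l) * m.choose (j + l) : ℝ) ≤
      (1 + 1 / (2 * L)) * (n.choose (i - (l + 1)) * m.choose (j + (l + 1))) := by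
  have hLn : 8 * L ≤ n + 1 := by nlinarith [min_le_left n m]
  have hLm : 8 * L ≤ m + 1 := by nlinarith [min_le_right n m]
  obtain ⟨a, rfl⟩ : ∃ a, i = a + l + 1 := ⟨i - (l + 1), by omega⟩
  rw [show a + l + 1 - l = a + 1 by omega, show a + l + 1 - (l + 1) = a by omega, ← add_assoc]
  apply choose_succ_mul_choose_le (by omega)
  · nlinarith
  · have hA : n + 1 ≤ 8 * (a + 1) := by omega
    have hB : m + 1 ≤ 8 * (m - (j + l)) := by omega
    have hAB : (n + 1) * (m + 1) ≤ 64 * ((a + 1) * (m - (j + l))) := by nlinarith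
    have hμ : (min n m + 1) * (n + m + 2) ≤ 2 * ((n + 1) * (m + 1)) := by
      nlinarith [min_le_left n m, min_le_right n m]
    nlinarith

theorem succ_mul_choose_mul_choose_le (n m a b L : ℕ) (hs₁ : n + m ≤ 4 * (a + b))
    (hs₂ : 4 * (a + b) ≤ 3 * (n + m)) (hL : 256 * L ^ 2 ≤ min n m + 1) :
    (L + 1) * (n.choose a * m.choose b : ℝ) ≤ 2 * (n + m).choose (a + b) := by
  obtain ⟨⟨i, j⟩, hij, hmax⟩ := exists_max_image (antidiagonal (a + b))
    (fun p => n.choose p.1 * m.choose p.2) ⟨(a, b), HasAntidiagonal.mem_antidiagonal.mpr rfl⟩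
  simp only [HasAntidiagonal.mem_antidiagonal] at hij
  rcases (n.choose a * m.choose b).eq_zero_or_pos with h0 | hpos
  · rw [← cast_mul, h0, cast_zero, mul_zero]
    positivity
  have hab : n.choose a * m.choose b ≤ n.choose i * m.choose j :=
    hmax (a, b) (HasAntidiagonal.mem_antidiagonal.mpr rfl)
  have hmode : (n + 1) * j ≤ (m + 1) * (i + 1) := by
    cases j with
    | zero => simp
    | succ j =>
      exact succ_mul_succ_le_of_choose_mul_choose_le (hpos.trans_le hab)
        (hmax (i + 1, j) (HasAntidiagonal.mem_antidiagonal.mpr (by simp only at hij ⊢; omega)))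
  have hmode_sum :
      (n + 1) * (i + j + 1) + (m + 1) * j ≤ (n + m + 2) * (i + 1) + (n + m + 2) * j := by
    nlinarith
  have hi : n + 1 ≤ 4 * (i + 1) := by nlinarith
  have hj : 4 * j ≤ 3 * (m + 1) := by nlinarith
  have hLi : L ≤ i := by nlinarith [min_le_left n m]
  have hwindow := succ_mul_le_two_mul_sum_range_of_le_mul
    (f := fun l => (n.choose (i - l) * m.choose (j + l) : ℝ)) (ρ := 1 + 1 / (2 * L))
    (le_add_of_nonneg_right (by positivity)) (one_add_one_div_two_mul_pow_le_two L)
    (fun l => by positivity)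
    (fun l hl => choose_mul_choose_le_of_near_mode hmode hi hj hL hl)
  calc (L + 1) * (n.choose a * m.choose b : ℝ) ≤ (L + 1) * (n.choose i * m.choose j : ℝ) := by
        gcongr (L + 1 : ℝ) * ?_
        exact_mod_cast hab
    _ ≤ 2 * ∑ l ∈ range (L + 1), (n.choose (i - l) * m.choose (j + l) : ℝ) := by
        simpa using hwindow
    _ ≤ 2 * (n + m).choose (a + b) := by
        rw [← hij]
        gcongr
        exact_mod_cast sum_range_choose_mul_choose_le n m i j L hLi

theorem choose_mul_choose_mul_sqrt_le (n m a b : ℕ) (hs₁ : n + m ≤ 4 * (a + b))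
    (hs₂ : 4 * (a + b) ≤ 3 * (n + m)) :
    (n.choose a * m.choose b : ℝ) * √(1 + min n m) ≤ 32 * (n + m).choose (a + b) := by
  set L := Nat.sqrt (min n m + 1) / 16
  have hL : 256 * L ^ 2 ≤ min n m + 1 := by
    have h16 : 16 * L ≤ Nat.sqrt (min n m + 1) := by omega
    nlinarith [Nat.sqrt_le' (min n m + 1), mul_le_mul h16 h16]
  have hsqrt : √(1 + min n m : ℝ) ≤ 16 * (L + 1) := by
    have h := Real.real_sqrt_le_nat_sqrt_succ (a := min n m + 1)
    have h16 : (Nat.sqrt (min n m + 1) + 1 : ℝ) ≤ 16 * (L + 1) := by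
      exact_mod_cast (show Nat.sqrt (min n m + 1) + 1 ≤ 16 * (L + 1) by omega)
    rw [add_comm, ← cast_add_one]
    exact h.trans h16
  calc (n.choose a * m.choose b : ℝ) * √(1 + min n m)
      ≤ (n.choose a * m.choose b : ℝ) * (16 * (L + 1)) := by gcongr
    _ = 16 * ((L + 1) * (n.choose a * m.choose b : ℝ)) := by ring
    _ ≤ 32 * (n + m).choose (a + b) := by
        linarith [succ_mul_choose_mul_choose_le n m a b L hs₁ hs₂ hL]

end Nat

noncomputable def walkProb : ℕ → ℤ → ℝ
  | 0, k => if k = 0 then 1 else 0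
  | t + 1, k => (walkProb t (k + 1) + walkProb t (k - 1)) / 2

theorem walkProb_nonneg (t : ℕ) (k : ℤ) : 0 ≤ walkProb t k := by
  induction t generalizing k with
  | zero => unfold walkProb; split_ifs <;> norm_num
  | succ t ih => unfold walkProb; linarith [ih (k + 1), ih (k - 1)]

theorem exists_eq_two_mul_sub_of_walkProb_ne_zero {t : ℕ} {k : ℤ} (h : walkProb t k ≠ 0) :
    ∃ a : ℕ, k = 2 * a - t := by
  induction t generalizing k with
  | zero =>
    refine ⟨0, ?_⟩
    by_contra hk
    simp_all [walkProb]
  | succ t ih =>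
    by_cases h' : walkProb t (k + 1) = 0
    · obtain ⟨a, ha⟩ := ih (k := k - 1) (by intro h''; simp_all [walkProb])
      exact ⟨a + 1, by push_cast; omega⟩
    · obtain ⟨a, ha⟩ := ih h'
      exact ⟨a, by push_cast; omega⟩

theorem walkProb_two_mul_sub (t a : ℕ) : walkProb t (2 * a - t) = t.choose a / 2 ^ t := by
  induction t generalizing a with
  | zero =>
    cases a with
    | zero => simp [walkProb]
    | succ a => rw [walkProb, if_neg (by omega)]; simp
  | succ t ih =>
    rw [walkProb]
    cases a with
    | zero =>
      have hout : walkProb t (2 * (0 : ℕ) - (t + 1 : ℕ) - 1) = 0 := by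
        by_contra h
        obtain ⟨a, ha⟩ := exists_eq_two_mul_sub_of_walkProb_ne_zero h
        push_cast at ha
        omega
      rw [hout, show 2 * ((0 : ℕ) : ℤ) - (t + 1 : ℕ) + 1 = 2 * (0 : ℕ) - t by push_cast; ring, ih]
      simp only [Nat.choose_zero_right, Nat.cast_one, pow_succ]
      ring
    | succ a =>
      rw [show 2 * ((a + 1 : ℕ) : ℤ) - (t + 1 : ℕ) + 1 = 2 * (a + 1 : ℕ) - t by push_cast; ring,
        show 2 * ((a + 1 : ℕ) : ℤ) - (t + 1 : ℕ) - 1 = 2 * a - t by push_cast; ring, ih, ih,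
        Nat.choose_succ_succ']
      push_cast
      ring

theorem walkProb_bridge_le (n m : ℕ) (j k : ℤ) (hk : 2 * |k| ≤ n + m) :
    walkProb n j * walkProb m (k - j) / walkProb (n + m) k ≤ 32 / √(1 + min n m) := by
  have hrhs : 0 ≤ 32 / √(1 + min n m : ℝ) := by positivity
  by_cases hj : walkProb n j = 0
  · simpa [hj] using hrhs
  by_cases hkj : walkProb m (k - j) = 0
  · simpa [hkj] using hrhs
  obtain ⟨a, rfl⟩ := exists_eq_two_mul_sub_of_walkProb_ne_zero hj
  obtain ⟨b, hb⟩ := exists_eq_two_mul_sub_of_walkProb_ne_zero hkj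
  obtain rfl : k = 2 * (a + b : ℕ) - (n + m : ℕ) := by push_cast; omega
  have hs : n + m ≤ 4 * (a + b) ∧ 4 * (a + b) ≤ 3 * (n + m) := by
    push_cast at hk
    constructor <;> zify <;> cases abs_cases (2 * ((a : ℤ) + b) - (n + m)) <;> omega
  rw [hb, walkProb_two_mul_sub, walkProb_two_mul_sub, walkProb_two_mul_sub]
  have hchoose : (0 : ℝ) < (n + m).choose (a + b) := by
    exact_mod_cast Nat.choose_pos (by omega)
  have hratio : n.choose a / 2 ^ n * (m.choose b / 2 ^ m) / ((n + m).choose (a + b) / 2 ^ (n + m))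
      = (n.choose a * m.choose b : ℝ) / (n + m).choose (a + b) := by
    rw [pow_add]
    field_simp
  rw [hratio, div_le_div_iff₀ hchoose (by positivity)]
  linarith [Nat.choose_mul_choose_mul_sqrt_le n m a b hs.1 hs.2]

theorem eq_walkProb_mul_walkProb (p : ℕ → ℤ × ℤ → ℝ)
    (h0 : ∀ x : ℤ × ℤ, p 0 x = if x = 0 then 1 else 0)
    (hrec : ∀ (t : ℕ) (x : ℤ × ℤ),
      p (t + 1) x = (1 / 4) * (p t (x + (1, 0)) + p t (x - (1, 0))
        + p t (x + (0, 1)) + p t (x - (0, 1)))) (t : ℕ) (x : ℤ × ℤ) :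
    p t x = walkProb t (x.1 + x.2) * walkProb t (x.1 - x.2) := by
  induction t generalizing x with
  | zero =>
    have hx : x = 0 ↔ x.1 + x.2 = 0 ∧ x.1 - x.2 = 0 := by
      rw [Prod.ext_iff]
      constructor <;> (intro h; simp only [Prod.fst_zero, Prod.snd_zero] at *; omega)
    simp only [h0, walkProb, hx]
    split_ifs <;> simp_all
  | succ t ih =>
    simp only [hrec, ih, walkProb, Prod.fst_add, Prod.snd_add, Prod.fst_sub, Prod.snd_sub,
      add_zero, sub_zero]
    ring_nf

/-- There is `C₂` such that for the simple random walk on `ℤ²`: for all `t ≥ 1`,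
`x` with `|x|₁ ≤ t/2`, `0 ≤ n ≤ t`, and `z` with `|z|₁ ≤ n/2` and `|x-z|₁ ≤ (t-n)/2`,
`P(S_n = z, S_t = x)/P(S_t = x) = p(n,z)p(t-n,x-z)/p(t,x) ≤ C₂/(1 + min(n, t-n))`. -/
theorem markov_ratio_bound (p : ℕ → ℤ × ℤ → ℝ)
    (h0 : ∀ x : ℤ × ℤ, p 0 x = if x = 0 then 1 else 0)
    (hrec : ∀ (t : ℕ) (x : ℤ × ℤ),
      p (t + 1) x = (1 / 4) * (p t (x + (1, 0)) + p t (x - (1, 0))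
        + p t (x + (0, 1)) + p t (x - (0, 1)))) :
    ∃ C₂ : ℝ, 0 < C₂ ∧ ∀ (t n : ℕ) (x z : ℤ × ℤ), 1 ≤ t → n ≤ t →
      ((|x.1| + |x.2| : ℤ) : ℝ) ≤ t / 2 →
      ((|z.1| + |z.2| : ℤ) : ℝ) ≤ n / 2 →
      ((|(x - z).1| + |(x - z).2| : ℤ) : ℝ) ≤ ((t : ℝ) - n) / 2 →
      p n z * p (t - n) (x - z) / p t x ≤ C₂ / (1 + (min n (t - n) : ℕ)) := by
  refine ⟨32 ^ 2, by norm_num, fun t n x z _ hn hx _ _ => ?_⟩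
  obtain ⟨m, rfl⟩ : ∃ m, t = n + m := ⟨t - n, by omega⟩
  have hx' : 2 * (|x.1| + |x.2|) ≤ n + m := by
    have : (2 * (|x.1| + |x.2|) : ℝ) ≤ n + m := by push_cast at hx ⊢; linarith
    exact_mod_cast this
  have hbridge_nonneg (k j : ℤ) := div_nonneg
    (mul_nonneg (walkProb_nonneg n j) (walkProb_nonneg m (k - j))) (walkProb_nonneg (n + m) k)
  rw [Nat.add_sub_cancel_left]
  simp only [eq_walkProb_mul_walkProb p h0 hrec, Prod.fst_sub, Prod.snd_sub]
  calc _ = walkProb n (z.1 + z.2) * walkProb m (x.1 + x.2 - (z.1 + z.2))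
          / walkProb (n + m) (x.1 + x.2) *
        (walkProb n (z.1 - z.2) * walkProb m (x.1 - x.2 - (z.1 - z.2))
          / walkProb (n + m) (x.1 - x.2)) := by
        rw [mul_mul_mul_comm, ← mul_div_mul_comm]; ring_nf
    _ ≤ 32 / √(1 + min n m) * (32 / √(1 + min n m)) := by
        refine mul_le_mul ?_ ?_ (hbridge_nonneg _ _) (by positivity)
        · exact walkProb_bridge_le n m _ (x.1 + x.2) (by linarith [abs_add_le x.1 x.2])
        · exact walkProb_bridge_le n m _ (x.1 - x.2) (by linarith [abs_sub x.1 x.2])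
    _ = 32 ^ 2 / (1 + min n m) := by
        rw [div_mul_div_comm, mul_self_sqrt (by positivity), sq]
end
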